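/- (Per-process collision count bound from the proof of the work-complexity theorem) For all integers n ≥ 1, m ≥ 2 and every integer p with 1 ≤ p ≤ m, the sum over all q ∈ {1,…,m} with q ≠ p of 2·⌈n/(m·|q−p|)⌉ is at most 2(m−1) + (4n/m)·log₂ m. -/
import Mathlib

open Finset Real

noncomputable def Hsum (k : ℕ) : ℝ := ∑ j ∈ Finset.Icc 1 k, (1 : ℝ) / j

lemma logb_one_add_ge (x : ℝ) (h0 : 0 ≤ x) (h1 : x ≤ 1) :
    x ≤ Real.logb 2 (1 + x) := by
  have hexp : Real.exp (x * Real.log 2) ≤ 1 + x := by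
    have hc := convexOn_exp.2 (Set.mem_univ (0:ℝ)) (Set.mem_univ (Real.log 2))
      (by linarith : (0:ℝ) ≤ 1 - x) h0 (by ring)
    simp only [smul_eq_mul, mul_zero, zero_add, Real.exp_zero,
      Real.exp_log (by norm_num : (0:ℝ) < 2)] at hc
    calc Real.exp (x * Real.log 2) = Real.exp ((1-x) * 0 + x * Real.log 2) := by ring_nf
      _ ≤ (1-x) * 1 + x * 2 := by simpa using hc
      _ = 1 + x := by ring
  have h2 : Real.logb 2 (Real.exp (x * Real.log 2)) ≤ Real.logb 2 (1 + x) :=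
    Real.logb_le_logb_of_le (by norm_num) (Real.exp_pos _) hexp
  have : Real.logb 2 (Real.exp (x * Real.log 2)) = x := by
    rw [Real.logb, Real.log_exp]
    field_simp
  linarith [h2, this.symm.le]

lemma Hsum_le_logb (k : ℕ) : Hsum k ≤ Real.logb 2 (k + 1) := by
  induction k with
  | zero => simp [Hsum]
  | succ k ih =>
    have hstep : (1 : ℝ) / ((k:ℝ) + 1) ≤ Real.logb 2 ((k:ℝ)+2) - Real.logb 2 ((k:ℝ)+1) := by
      have hx : (0:ℝ) ≤ 1 / ((k:ℝ)+1) := by positivity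
      have hx1 : (1:ℝ) / ((k:ℝ)+1) ≤ 1 := by
        rw [div_le_one (by positivity)]; linarith [Nat.cast_nonneg (α := ℝ) k]
      have h := logb_one_add_ge (1 / ((k:ℝ)+1)) hx hx1
      have heq : (1:ℝ) + 1/((k:ℝ)+1) = ((k:ℝ)+2) / ((k:ℝ)+1) := by
        field_simp
        ring
      rw [heq, Real.logb_div (by positivity) (by positivity)] at h
      linarith
    have hH : Hsum (k+1) = Hsum k + 1 / ((k:ℝ)+1) := by
      unfold Hsum
      rw [Finset.sum_Icc_succ_top (by omega)]
      push_cast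
      ring
    rw [hH]
    have he : ((k:ℝ)+1)+1 = (k:ℝ)+2 := by ring
    push_cast
    rw [he]
    linarith

lemma Hsum_mono {a b : ℕ} (h : a ≤ b) : Hsum a ≤ Hsum b := by
  unfold Hsum
  apply Finset.sum_le_sum_of_subset_of_nonneg
  · exact Finset.Icc_subset_Icc_right h
  · intro i _ _; positivity

lemma dist_sum_le (m p : ℕ) (hm : 2 ≤ m) (hp : 1 ≤ p) (hpm : p ≤ m) :
    ∑ q ∈ (Finset.Icc 1 m).erase p, (1 : ℝ) / (Nat.dist q p : ℝ) ≤
      2 * Real.logb 2 m := by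
  have hsplit : (Finset.Icc 1 m).erase p =
      Finset.Icc 1 (p-1) ∪ Finset.Icc (p+1) m := by
    ext q
    simp only [Finset.mem_erase, Finset.mem_Icc, Finset.mem_union]
    omega
  have hdisj : Disjoint (Finset.Icc 1 (p-1)) (Finset.Icc (p+1) m) := by
    rw [Finset.disjoint_left]
    intro q hq hq'
    simp only [Finset.mem_Icc] at hq hq'
    omega
  rw [hsplit, Finset.sum_union hdisj]
  have h1 : ∑ q ∈ Finset.Icc 1 (p-1), (1 : ℝ) / (Nat.dist q p : ℝ) = Hsum (p-1) := by
    unfold Hsum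
    apply Finset.sum_nbij' (fun q => p - q) (fun j => p - j)
    · intro a ha; simp only [Finset.mem_Icc] at ha ⊢; omega
    · intro a ha; simp only [Finset.mem_Icc] at ha ⊢; omega
    · intro a ha; simp only [Finset.mem_Icc] at ha; omega
    · intro a ha; simp only [Finset.mem_Icc] at ha; omega
    · intro a ha; simp only [Finset.mem_Icc] at ha
      have : Nat.dist a p = p - a := by simp [Nat.dist]; omega
      rw [this]
  have h2 : ∑ q ∈ Finset.Icc (p+1) m, (1 : ℝ) / (Nat.dist q p : ℝ) = Hsum (m-p) := by
    unfold Hsum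
    apply Finset.sum_nbij' (fun q => q - p) (fun j => j + p)
    · intro a ha; simp only [Finset.mem_Icc] at ha ⊢; omega
    · intro a ha; simp only [Finset.mem_Icc] at ha ⊢; omega
    · intro a ha; simp only [Finset.mem_Icc] at ha; omega
    · intro a ha; simp only [Finset.mem_Icc] at ha; omega
    · intro a ha; simp only [Finset.mem_Icc] at ha
      have : Nat.dist a p = a - p := by simp [Nat.dist]; omega
      rw [this]
  rw [h1, h2]
  have hA : Hsum (p-1) ≤ Real.logb 2 m := by
    calc Hsum (p-1) ≤ Hsum (m-1) := Hsum_mono (by omega)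
      _ ≤ Real.logb 2 ((m-1:ℕ) + 1) := Hsum_le_logb _
      _ = Real.logb 2 m := by congr 1; push_cast [Nat.cast_sub (by omega : 1 ≤ m)]; ring
  have hB : Hsum (m-p) ≤ Real.logb 2 m := by
    calc Hsum (m-p) ≤ Hsum (m-1) := Hsum_mono (by omega)
      _ ≤ Real.logb 2 ((m-1:ℕ) + 1) := Hsum_le_logb _
      _ = Real.logb 2 m := by congr 1; push_cast [Nat.cast_sub (by omega : 1 ≤ m)]; ring
  linarith

/-- **Per-process collision count bound from the proof of the work-complexity
theorem.** For all integers `n ≥ 1`, `m ≥ 2` and every integer `p` with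
`1 ≤ p ≤ m`, the sum over all `q ∈ {1,…,m}` with `q ≠ p` of
`2·⌈n/(m·|q−p|)⌉` is at most `2(m−1) + (4n/m)·log₂ m`. -/
theorem collision_count_bound (n m p : ℕ) (hn : 1 ≤ n) (hm : 2 ≤ m)
    (hp : 1 ≤ p) (hpm : p ≤ m) :
    ∑ q ∈ (Finset.Icc 1 m).erase p,
        ((2 * ⌈(n : ℚ) / ((m : ℚ) * (Nat.dist q p : ℚ))⌉₊ : ℕ) : ℝ) ≤
      2 * ((m : ℝ) - 1) + 4 * (n : ℝ) / (m : ℝ) * Real.logb 2 (m : ℝ) := by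
  have hm0 : (0:ℝ) < m := by positivity
  have step1 : ∀ q ∈ (Finset.Icc 1 m).erase p,
      ((2 * ⌈(n : ℚ) / ((m : ℚ) * (Nat.dist q p : ℚ))⌉₊ : ℕ) : ℝ) ≤
        2 + (2 * n / m) * (1 / (Nat.dist q p : ℝ)) := by
    intro q hq
    have hd : 1 ≤ Nat.dist q p := by
      simp only [Finset.mem_erase, Finset.mem_Icc] at hq
      simp [Nat.dist]; omega
    have hdR : (1:ℝ) ≤ (Nat.dist q p : ℝ) := by exact_mod_cast hd
    have hceil : (⌈(n : ℚ) / ((m : ℚ) * (Nat.dist q p : ℚ))⌉₊ : ℚ) ≤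
        (n : ℚ) / ((m : ℚ) * (Nat.dist q p : ℚ)) + 1 :=
      (Nat.ceil_lt_add_one (by positivity)).le
    have hceilR : (⌈(n : ℚ) / ((m : ℚ) * (Nat.dist q p : ℚ))⌉₊ : ℝ) ≤
        (n : ℝ) / ((m : ℝ) * (Nat.dist q p : ℝ)) + 1 := by
      have := (Rat.cast_le (K := ℝ)).2 hceil
      push_cast at this
      convert this using 2
    push_cast
    have hd0 : (0:ℝ) < (Nat.dist q p : ℝ) := by linarith
    calc 2 * ((⌈(n : ℚ) / ((m : ℚ) * (Nat.dist q p : ℚ))⌉₊ : ℕ) : ℝ)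
        ≤ 2 * ((n : ℝ) / ((m : ℝ) * (Nat.dist q p : ℝ)) + 1) := by linarith
      _ = 2 + 2 * (n:ℝ) / (m:ℝ) * (1 / (Nat.dist q p : ℝ)) := by field_simp; ring
  calc ∑ q ∈ (Finset.Icc 1 m).erase p,
        ((2 * ⌈(n : ℚ) / ((m : ℚ) * (Nat.dist q p : ℚ))⌉₊ : ℕ) : ℝ)
      ≤ ∑ q ∈ (Finset.Icc 1 m).erase p,
        (2 + (2 * n / m) * (1 / (Nat.dist q p : ℝ))) := Finset.sum_le_sum step1
    _ = 2 * ((m:ℝ) - 1) + (2 * n / m) *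
        ∑ q ∈ (Finset.Icc 1 m).erase p, (1 / (Nat.dist q p : ℝ)) := by
        rw [Finset.sum_add_distrib, Finset.sum_const, ← Finset.mul_sum]
        have hcard : ((Finset.Icc 1 m).erase p).card = m - 1 := by
          rw [Finset.card_erase_of_mem (by simp [Finset.mem_Icc]; omega), Nat.card_Icc]
          omega
        rw [hcard, nsmul_eq_mul, Nat.cast_sub (by omega : 1 ≤ m)]
        push_cast
        ring
    _ ≤ 2 * ((m:ℝ) - 1) + (2 * n / m) * (2 * Real.logb 2 m) := by
        have := dist_sum_le m p hm hp hpm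
        have hc : (0:ℝ) ≤ 2 * n / m := by positivity
        nlinarith
    _ = 2 * ((m:ℝ) - 1) + 4 * (n : ℝ) / (m : ℝ) * Real.logb 2 (m : ℝ) := by ring
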